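/- There exists a primitive embedding ι of the lattice U ⊕ U ⊕ A₁ (ℤ⁵ with block-diagonal Gram matrix with blocks [[0,1],[1,0]], [[0,1],[1,0]], and the 1×1 block (−2)) into the K3 lattice Λ_K3 such that the orthogonal complement of ι(ℤ⁵) in Λ_K3, equipped with the restricted bilinear form, is isometric to the lattice U ⊕ E₇ ⊕ E₈ (ℤ¹⁷ with block-diagonal Gram matrix with blocks U, E₇, E₈). -/
import Mathlib


open Matrix

/-- The hyperbolic lattice `U`. -/
def U : Matrix (Fin 2) (Fin 2) ℤ := !![0, 1; 1, 0]

/-- The root lattice `A₁` (negative definite). -/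
def A1 : Matrix (Fin 1) (Fin 1) ℤ := !![-2]

/-- The root lattice `A₂` (negative definite). -/
def A2 : Matrix (Fin 2) (Fin 2) ℤ := !![-2, 1; 1, -2]

/-- The root lattice `A₆` (negative definite). -/
def A6 : Matrix (Fin 6) (Fin 6) ℤ :=
  !![-2, 1, 0, 0, 0, 0;
    1, -2, 1, 0, 0, 0;
    0, 1, -2, 1, 0, 0;
    0, 0, 1, -2, 1, 0;
    0, 0, 0, 1, -2, 1;
    0, 0, 0, 0, 1, -2]

/-- The lattice `C₈⁶` of Nishiyama's lemma. -/
def C86 : Matrix (Fin 2) (Fin 2) ℤ := !![-4, 1; 1, -2]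

/-- The root lattice `E₈` (negative of the Cartan matrix, Bourbaki numbering). -/
def E8 : Matrix (Fin 8) (Fin 8) ℤ :=
  !![-2, 0, 1, 0, 0, 0, 0, 0;
    0, -2, 0, 1, 0, 0, 0, 0;
    1, 0, -2, 1, 0, 0, 0, 0;
    0, 1, 1, -2, 1, 0, 0, 0;
    0, 0, 0, 1, -2, 1, 0, 0;
    0, 0, 0, 0, 1, -2, 1, 0;
    0, 0, 0, 0, 0, 1, -2, 1;
    0, 0, 0, 0, 0, 0, 1, -2]

/-- The root lattice `E₇` (nodes 1–7 of `E₈` in Bourbaki numbering). -/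
def E7 : Matrix (Fin 7) (Fin 7) ℤ :=
  !![-2, 0, 1, 0, 0, 0, 0;
    0, -2, 0, 1, 0, 0, 0;
    1, 0, -2, 1, 0, 0, 0;
    0, 1, 1, -2, 1, 0, 0;
    0, 0, 0, 1, -2, 1, 0;
    0, 0, 0, 0, 1, -2, 1;
    0, 0, 0, 0, 0, 1, -2]

/-- The root lattice `E₆` (nodes 1–6 of `E₈` in Bourbaki numbering). -/
def E6 : Matrix (Fin 6) (Fin 6) ℤ :=
  !![-2, 0, 1, 0, 0, 0;
    0, -2, 0, 1, 0, 0;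
    1, 0, -2, 1, 0, 0;
    0, 1, 1, -2, 1, 0;
    0, 0, 0, 1, -2, 1;
    0, 0, 0, 0, 1, -2]

/-- Block-diagonal (direct) sum of two Gram matrices. -/
def dsum {m n : ℕ} (A : Matrix (Fin m) (Fin m) ℤ) (B : Matrix (Fin n) (Fin n) ℤ) :
    Matrix (Fin (m + n)) (Fin (m + n)) ℤ :=
  Matrix.reindex finSumFinEquiv finSumFinEquiv (Matrix.fromBlocks A 0 0 B)

/-- The K3 lattice `Λ_K3 = U ⊕ U ⊕ U ⊕ E₈ ⊕ E₈`. -/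
def LambdaK3 : Matrix (Fin 22) (Fin 22) ℤ := dsum (dsum (dsum (dsum U U) U) E8) E8

/-- The lattice `U ⊕ U ⊕ A₁`. -/
def UUA1 : Matrix (Fin 5) (Fin 5) ℤ := dsum (dsum U U) A1

/-- The lattice `U ⊕ E₇ ⊕ E₈`. -/
def UE7E8 : Matrix (Fin 17) (Fin 17) ℤ := dsum (dsum U E7) E8

/-- The highest root of the first `E₈` block, as a vector in `Λ_K3`. -/
def theta : Fin 22 → ℤ := ![0,0,0,0,0,0,2,3,4,6,5,4,3,2,0,0,0,0,0,0,0,0]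

/-- Matrix of the embedding `U ⊕ U ⊕ A₁ → Λ_K3`. -/
def Amat : Matrix (Fin 22) (Fin 5) ℤ :=
  Matrix.of fun i j => if (j:ℕ) = 4 then theta i else if (i:ℕ) = (j:ℕ) then 1 else 0

/-- Matrix of the embedding of the orthogonal complement `U ⊕ E₇ ⊕ E₈ → Λ_K3`. -/
def Bmat : Matrix (Fin 22) (Fin 17) ℤ :=
  Matrix.of fun i j => if (i:ℕ) = (if (j:ℕ) < 9 then (j:ℕ)+4 else (j:ℕ)+5) then 1 else 0

/-- Left inverse of `Amat`. -/
def Lmat : Matrix (Fin 5) (Fin 22) ℤ :=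
  Matrix.of fun i j =>
    if (i:ℕ) = 4 then (if (j:ℕ) = 6 then -1 else if (j:ℕ) = 7 then 1 else 0)
    else if (i:ℕ) = (j:ℕ) then 1 else 0

/-- Witness matrix expressing `1 - Bmat * Bmatᵀ` through `Amatᵀ * LambdaK3`. -/
def Dmat : Matrix (Fin 22) (Fin 5) ℤ :=
  Matrix.of fun i j =>
    if (i:ℕ) = 0 then (if (j:ℕ) = 1 then 1 else 0)
    else if (i:ℕ) = 1 then (if (j:ℕ) = 0 then 1 else 0)
    else if (i:ℕ) = 2 then (if (j:ℕ) = 3 then 1 else 0)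
    else if (i:ℕ) = 3 then (if (j:ℕ) = 2 then 1 else 0)
    else if (i:ℕ) = 13 then (if (j:ℕ) = 4 then -1 else 0)
    else 0

lemma gram_aux {p q r : ℕ} (P : Matrix (Fin p) (Fin q) ℤ) (Q : Matrix (Fin p) (Fin r) ℤ)
    (G : Matrix (Fin p) (Fin p) ℤ) (S : Matrix (Fin q) (Fin r) ℤ) (h : Pᵀ * G * Q = S)
    (x : Fin q → ℤ) (y : Fin r → ℤ) :
    (P *ᵥ x) ⬝ᵥ (G *ᵥ (Q *ᵥ y)) = x ⬝ᵥ (S *ᵥ y) := by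
  subst h
  rw [Matrix.mulVec_mulVec, Matrix.dotProduct_mulVec, Matrix.dotProduct_mulVec,
    ← Matrix.vecMul_transpose, Matrix.vecMul_vecMul, Matrix.mul_assoc]

lemma hLA : Lmat * Amat = 1 := by decide
lemma hAGA : Amatᵀ * LambdaK3 * Amat = UUA1 := by decide
lemma hBGB : Bmatᵀ * LambdaK3 * Bmat = UE7E8 := by decide
lemma hBGA : Bmatᵀ * LambdaK3 * Amat = 0 := by decide
lemma hBB : Bmatᵀ * Bmat = 1 := by decide
set_option maxHeartbeats 1600000 in
lemma hD : (1 : Matrix (Fin 22) (Fin 22) ℤ) - Bmat * Bmatᵀ = Dmat * (Amatᵀ * LambdaK3) := by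
  decide
set_option maxHeartbeats 1600000 in
lemma hGsym : LambdaK3ᵀ = LambdaK3 := by decide

/-- There is a primitive embedding of U ⊕ U ⊕ A₁ into the K3 lattice whose orthogonal complement is isometric to U ⊕ E₇ ⊕ E₈. -/
theorem primitive_embedding_UUA1_K3 :
    ∃ ι : (Fin 5 → ℤ) →ₗ[ℤ] (Fin 22 → ℤ),
      -- ι is an embedding of the lattice (U ⊕ U ⊕ A₁) into (Λ_K3) ...
      Function.Injective ι ∧
      (∀ x y : Fin 5 → ℤ, ι x ⬝ᵥ (LambdaK3 *ᵥ ι y) = x ⬝ᵥ (UUA1 *ᵥ y)) ∧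
      -- ... which is primitive (its image is saturated, i.e. the cokernel is torsion-free) ...
      (∀ (v : Fin 22 → ℤ) (k : ℤ), k ≠ 0 → k • v ∈ LinearMap.range ι → v ∈ LinearMap.range ι) ∧
      -- ... and the orthogonal complement of the image of ι, with the restricted form,
      -- is isometric to (U ⊕ E₇ ⊕ E₈): there is an injective linear map j preserving the forms
      -- whose range is exactly the orthogonal complement of the image of ι.
      ∃ j : (Fin 17 → ℤ) →ₗ[ℤ] (Fin 22 → ℤ),
        Function.Injective j ∧
        (∀ x y : Fin 17 → ℤ, j x ⬝ᵥ (LambdaK3 *ᵥ j y) = x ⬝ᵥ (UE7E8 *ᵥ y)) ∧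
        (∀ v : Fin 22 → ℤ, v ∈ LinearMap.range j ↔ ∀ x : Fin 5 → ℤ, v ⬝ᵥ (LambdaK3 *ᵥ ι x) = 0) := by
  refine ⟨Amat.mulVecLin, ?_, ?_, ?_, Bmat.mulVecLin, ?_, ?_, ?_⟩
  · -- injectivity of ι
    intro x y hxy
    have h := congrArg (fun w => Lmat *ᵥ w) hxy
    simpa [Matrix.mulVecLin_apply, Matrix.mulVec_mulVec, hLA] using h
  · -- Gram condition for ι
    intro x y
    simpa [Matrix.mulVecLin_apply] using gram_aux Amat Amat LambdaK3 UUA1 hAGA x y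
  · -- primitivity
    rintro v k hk ⟨c, hc⟩
    simp only [Matrix.mulVecLin_apply] at hc
    refine ⟨Lmat *ᵥ v, ?_⟩
    have h1 : Amat *ᵥ (Lmat *ᵥ (k • v)) = k • v := by
      rw [← hc, Matrix.mulVec_mulVec, Matrix.mulVec_mulVec, Matrix.mul_assoc, hLA,
        Matrix.mul_one]
    have h2 : Amat *ᵥ (Lmat *ᵥ (k • v)) = k • (Amat *ᵥ (Lmat *ᵥ v)) := by
      rw [Matrix.mulVec_smul, Matrix.mulVec_smul]
    have h3 : k • (Amat *ᵥ (Lmat *ᵥ v)) = k • v := by rw [← h2, h1]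
    have := smul_right_injective (Fin 22 → ℤ) hk h3
    simpa [Matrix.mulVecLin_apply] using this
  · -- injectivity of j
    intro x y hxy
    have h := congrArg (fun w => Bmatᵀ *ᵥ w) hxy
    simpa [Matrix.mulVecLin_apply, Matrix.mulVec_mulVec, hBB] using h
  · -- Gram condition for j
    intro x y
    simpa [Matrix.mulVecLin_apply] using gram_aux Bmat Bmat LambdaK3 UE7E8 hBGB x y
  · -- range characterization
    intro v
    constructor
    · rintro ⟨y, rfl⟩ x
      simpa [Matrix.mulVecLin_apply] using gram_aux Bmat Amat LambdaK3 0 hBGA y x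
    · intro h
      -- first: (Amatᵀ * LambdaK3) *ᵥ v = 0
      have key : ∀ x : Fin 5 → ℤ,
          v ⬝ᵥ (LambdaK3 *ᵥ (Amat *ᵥ x)) = ((Amatᵀ * LambdaK3) *ᵥ v) ⬝ᵥ x := by
        intro x
        rw [Matrix.mulVec_mulVec, Matrix.dotProduct_mulVec]
        congr 1
        rw [← Matrix.mulVec_transpose, Matrix.transpose_mul, hGsym]
      have hv : (Amatᵀ * LambdaK3) *ᵥ v = 0 := by
        funext i
        have h1 := (key (Pi.single i 1)).symm.trans (by
          simpa [Matrix.mulVecLin_apply] using h (Pi.single i 1))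
        simpa using h1
      refine ⟨Bmatᵀ *ᵥ v, ?_⟩
      simp only [Matrix.mulVecLin_apply]
      have h2 : v - Bmat *ᵥ (Bmatᵀ *ᵥ v) = 0 := by
        rw [Matrix.mulVec_mulVec]
        have : v - (Bmat * Bmatᵀ) *ᵥ v = ((1 : Matrix (Fin 22) (Fin 22) ℤ) - Bmat * Bmatᵀ) *ᵥ v := by
          rw [Matrix.sub_mulVec, Matrix.one_mulVec]
        rw [this, hD, ← Matrix.mulVec_mulVec, hv, Matrix.mulVec_zero]
      have := sub_eq_zero.mp h2
      exact this.symm
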